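/- Let G = Γ(𝔽_p[x]/(x^{2b})), b ≥ 1. Then 0 is an eigenvalue of the adjacency matrix A(G) with multiplicity at least ∑_{i=1}^{b−1}((p−1)p^{2b−1−i} − 1), and −1 is an eigenvalue with multiplicity at least ∑_{i=b}^{2b−1}((p−1)p^{2b−1−i} − 1). -/

import Mathlib

open Polynomial

noncomputable section

/-- The truncated polynomial ring `𝔽_p[x]/(x^c)`. -/
abbrev TPR (p c : ℕ) : Type := AdjoinRoot (X ^ c : (ZMod p)[X])

instance (p c : ℕ) [Fact p.Prime] : Finite (TPR p c) := by
  have hb : PowerBasis (ZMod p) (TPR p c) :=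
    AdjoinRoot.powerBasis (pow_ne_zero c Polynomial.X_ne_zero)
  have : Module.Finite (ZMod p) (TPR p c) := Module.Finite.of_basis hb.basis
  exact Module.finite_of_finite (ZMod p)

/-- The canonical representative (the unique representative of degree `< c`)
of an element of `𝔽_p[x]/(x^c)`. -/
def canon {p c : ℕ} (f : TPR p c) : (ZMod p)[X] :=
  Function.surjInv (AdjoinRoot.mk_surjective (g := (X ^ c : (ZMod p)[X]))) f %ₘ X ^ c

/-- The minimal degree: the least exponent with nonzero coefficient in the
canonical representative. -/
def mindeg {p c : ℕ} (f : TPR p c) : ℕ := (canon f).natTrailingDegree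

/-- The set of nonzero zero-divisors of `𝔽_p[x]/(x^c)`. -/
def zd (p c : ℕ) : Set (TPR p c) := {f | f ≠ 0 ∧ ∃ g, g ≠ 0 ∧ f * g = 0}

/-- The zero-divisor graph of `𝔽_p[x]/(x^c)`: vertices are the nonzero
zero-divisors, and `f ~ g` iff `f ≠ g` and `f * g = 0`. -/
def zdGraph (p c : ℕ) : SimpleGraph (zd p c) where
  Adj a b := a ≠ b ∧ (a : TPR p c) * (b : TPR p c) = 0
  symm := ⟨fun a b h => ⟨h.1.symm, by rw [mul_comm]; exact h.2⟩⟩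
  loopless := ⟨fun a h => h.1 rfl⟩

noncomputable instance (p c : ℕ) [Fact p.Prime] : Fintype (zd p c) := Fintype.ofFinite _

open scoped Classical in
/-- The adjacency matrix of the zero-divisor graph, over `ℝ`. -/
def adjM (p c : ℕ) : Matrix (zd p c) (zd p c) ℝ :=
  Matrix.of fun a b => if (zdGraph p c).Adj a b then 1 else 0

open scoped Classical in
/-- The diagonal degree matrix of the zero-divisor graph, over `ℝ`. -/
def degM (p c : ℕ) : Matrix (zd p c) (zd p c) ℝ :=
  Matrix.diagonal fun v => (((zdGraph p c).neighborSet v).ncard : ℝ)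

/-!
For nonzero `f` in `𝔽_p[x]/(x^c)` the minimal degree `v(f) = mindeg f` is the `x`-adic valuation,
so `f * g = 0` iff `c ≤ v(f) + v(g)`. Hence the column of `A` at a vertex `w` depends only on
`v(w)`, up to the diagonal entry: if `2 v(w) < c` the diagonal condition fails anyway, so the
column of `A` depends only on `v(w)`, and if `c ≤ 2 v(w)` the column of `A + 1` does. So any two
vertices `w, w'` of the same valuation `i` give an eigenvector `e_w - e_w'` for `0` (`i < b`),
resp. `-1` (`b ≤ i`). Fixing a representative of each valuation class gives `#class - 1`
independent eigenvectors per class, and the class of `i` contains the `(p - 1) p^(c-1-i)`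
distinct elements `(u + q x) x^i` with `u ≠ 0` and `deg q < c - 1 - i`.
-/

open Module Module.End
open scoped Finset

section Polynomial

variable {R : Type*} [Ring R]

theorem X_pow_dvd_iff_le_natTrailingDegree {q : R[X]} (hq : q ≠ 0) {n : ℕ} :
    X ^ n ∣ q ↔ n ≤ q.natTrailingDegree := by
  rw [X_pow_dvd_iff]
  exact ⟨le_natTrailingDegree hq,
    fun h _ hd => coeff_eq_zero_of_lt_natTrailingDegree (hd.trans_le h)⟩

theorem degree_C_add_mul_X_mul_X_pow_lt [Nontrivial R] (i : ℕ) (u : R) {n : ℕ} {q : R[X]}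
    (hq : q.degree < n) :
    ((C u + q * X) * X ^ i).degree < ((n + 1 + i : ℕ) : WithBot ℕ) := by
  have h : (C u + q * X).degree ≤ (n : WithBot ℕ) := by
    refine (degree_add_le _ _).trans
      (max_le (degree_C_le.trans (by exact_mod_cast Nat.zero_le n)) ?_)
    rw [degree_mul_X]
    exact Nat.WithBot.add_one_le_of_lt hq
  calc ((C u + q * X) * X ^ i).degree ≤ (C u + q * X).degree + (i : WithBot ℕ) :=
        (degree_mul_le _ _).trans (by gcongr; exact degree_X_pow_le i)
    _ ≤ (n : WithBot ℕ) + (i : WithBot ℕ) := by gcongr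
    _ < _ := by norm_cast; omega

theorem C_add_mul_X_mul_X_pow_ne_zero (i : ℕ) {u : R} (hu : u ≠ 0) (q : R[X]) :
    (C u + q * X) * X ^ i ≠ 0 :=
  fun h => hu <| by
    have h0 := coeff_mul_X_pow (C u + q * X) i 0
    rw [zero_add, h, coeff_zero] at h0
    simpa using h0.symm

theorem natTrailingDegree_C_add_mul_X_mul_X_pow (i : ℕ) {u : R} (hu : u ≠ 0) (q : R[X]) :
    ((C u + q * X) * X ^ i).natTrailingDegree = i := by
  have hcoeff : (C u + q * X).coeff 0 = u := by simp
  have hne : C u + q * X ≠ 0 := fun h => hu (by rw [← hcoeff, h, coeff_zero])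
  rw [natTrailingDegree_mul_X_pow hne, natTrailingDegree_eq_zero.mpr (.inr (by rwa [hcoeff])),
    zero_add]

theorem C_add_mul_X_mul_X_pow_injective (i : ℕ) :
    Function.Injective fun x : R × R[X] => (C x.1 + x.2 * X) * X ^ i := by
  rintro ⟨u, q⟩ ⟨u', q'⟩ h
  have h' : C u + q * X = C u' + q' * X := (isRegular_X_pow i).right h
  have hu : u = u' := by simpa using congrArg (coeff · 0) h'
  subst hu
  simpa using isRegular_X.right (add_left_cancel h')

end Polynomial

section TwinVertices

open Matrix

variable {K V : Type*} [Field K] [DecidableEq V]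

theorem linearIndependent_single_sub_single (T : Finset V) (r : V → V)
    (hr : ∀ w ∈ T, r w ∉ T) :
    LinearIndependent K fun w : T => (Pi.single (w : V) (1 : K) - Pi.single (r w) 1 : V → K) := by
  rw [Fintype.linearIndependent_iff]
  intro g hg w₀
  have hw₀ := congrFun hg w₀
  have hr₀ (w : T) : r w ≠ w₀ := fun h => hr w w.2 (h ▸ w₀.2)
  have hterm (w : T) : (g w • (Pi.single (w : V) (1 : K) - Pi.single (r w) 1 : V → K)) w₀ =
      if w = w₀ then g w else 0 := by
    by_cases hw : w = w₀
    · subst hw; simp [hr₀]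
    · simp [hr₀, hw, Ne.symm (Subtype.ext_iff.not.mp hw)]
  simpa [Finset.sum_apply, hterm] using hw₀

theorem single_sub_single_mem_eigenspace [Fintype V] {A : Matrix V V K} {μ : K} {w w' : V}
    (h : ∀ u, (A - μ • 1) u w = (A - μ • 1) u w') :
    Pi.single w 1 - Pi.single w' 1 ∈ eigenspace A.mulVecLin μ := by
  have hker : (A - μ • 1) *ᵥ (Pi.single w 1 - Pi.single w' 1) = 0 := by
    ext u
    simp [mulVec_sub, h u]
  rw [mem_eigenspace_iff, mulVecLin_apply]
  simpa [sub_mulVec, smul_mulVec, sub_eq_zero] using hker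

theorem sum_card_fiber_sub_one_le_finrank_eigenspace [Fintype V] {ι : Type*} [DecidableEq ι]
    (A : Matrix V V K) (μ : K) (κ : V → ι) (s : Finset ι)
    (hA : ∀ u w w', κ w ∈ s → κ w' = κ w → (A - μ • 1) u w = (A - μ • 1) u w') :
    ∑ i ∈ s, (#{w | κ w = i} - 1) ≤ finrank K (eigenspace A.mulVecLin μ) := by
  rcases isEmpty_or_nonempty V with hV | hV
  · simp
  let r (w : V) : V := Function.invFun κ (κ w)
  have hκr (w : V) : κ (r w) = κ w := Function.invFun_eq ⟨w, rfl⟩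
  let T : Finset V := {w | κ w ∈ s ∧ w ≠ r w}
  have hrT (w : V) (_ : w ∈ T) : r w ∉ T := by simp [T, r, hκr]
  let v (w : T) : V → K := Pi.single (w : V) 1 - Pi.single (r w) 1
  have hspan : Submodule.span K (Set.range v) ≤ eigenspace A.mulVecLin μ :=
    Submodule.span_le.mpr <| Set.range_subset_iff.mpr fun w =>
      single_sub_single_mem_eigenspace fun u =>
        hA u w (r w) (Finset.mem_filter.mp w.2).2.1 (hκr w)
  calc ∑ i ∈ s, (#{w | κ w = i} - 1) ≤ #T := by
        rw [Finset.card_eq_sum_card_fiberwise (f := κ) (t := s)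
          fun w hw => (Finset.mem_filter.mp hw).2.1]
        gcongr with i hi
        calc #{w | κ w = i} - 1 ≤ #(({w | κ w = i} : Finset V).erase (Function.invFun κ i)) :=
              Finset.pred_card_le_card_erase
          _ ≤ #{w ∈ T | κ w = i} := Finset.card_le_card fun w hw => by
              simp_all [T, r]
    _ = finrank K (Submodule.span K (Set.range v)) := by
        rw [finrank_span_eq_card (linearIndependent_single_sub_single T r hrT), Fintype.card_coe]
    _ ≤ _ := Submodule.finrank_mono hspan

end TwinVertices

section TruncatedPolynomialRing

variable {p c : ℕ} [Fact p.Prime]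

theorem canon_eq_modByMonicHom (f : TPR p c) :
    canon f = AdjoinRoot.modByMonicHom (monic_X_pow c) f := by
  conv_rhs =>
    rw [← Function.surjInv_eq (AdjoinRoot.mk_surjective (g := (X ^ c : (ZMod p)[X]))) f]
  rw [AdjoinRoot.modByMonicHom_mk]
  rfl

theorem mk_canon (f : TPR p c) : AdjoinRoot.mk _ (canon f) = f := by
  rw [canon_eq_modByMonicHom]
  exact AdjoinRoot.mk_leftInverse _ f

theorem canon_degree_lt (f : TPR p c) : (canon f).degree < c := by
  obtain ⟨q, rfl⟩ := AdjoinRoot.mk_surjective f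
  rw [canon_eq_modByMonicHom, AdjoinRoot.modByMonicHom_mk]
  simpa using degree_modByMonic_lt q (monic_X_pow (R := ZMod p) c)

theorem canon_mk {q : (ZMod p)[X]} (hq : q.degree < c) : canon (AdjoinRoot.mk (X ^ c) q) = q := by
  rw [canon_eq_modByMonicHom, AdjoinRoot.modByMonicHom_mk, modByMonic_eq_self_iff (monic_X_pow c),
    degree_X_pow]
  exact hq

theorem canon_ne_zero {f : TPR p c} (hf : f ≠ 0) : canon f ≠ 0 := by
  intro h
  exact hf (by rw [← mk_canon f, h, map_zero])

theorem mk_ne_zero {q : (ZMod p)[X]} (hq : q.degree < c) (hq0 : q ≠ 0) :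
    AdjoinRoot.mk (X ^ c) q ≠ 0 :=
  fun h => hq0 (by rw [← canon_mk hq, h, canon_eq_modByMonicHom, map_zero])

theorem mindeg_mk {q : (ZMod p)[X]} (hq : q.degree < c) :
    mindeg (AdjoinRoot.mk (X ^ c) q) = q.natTrailingDegree := by
  rw [mindeg, canon_mk hq]

theorem mindeg_lt {f : TPR p c} (hf : f ≠ 0) : mindeg f < c := by
  have hdeg := (natDegree_lt_iff_degree_lt (canon_ne_zero hf)).mpr (canon_degree_lt f)
  exact (natTrailingDegree_le_natDegree _).trans_lt hdeg

theorem mul_eq_zero_iff_le_mindeg_add {f g : TPR p c} (hf : f ≠ 0) (hg : g ≠ 0) :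
    f * g = 0 ↔ c ≤ mindeg f + mindeg g := by
  have hfg : f * g = AdjoinRoot.mk _ (canon f * canon g) := by rw [map_mul, mk_canon, mk_canon]
  rw [hfg, AdjoinRoot.mk_eq_zero, X_pow_dvd_iff_le_natTrailingDegree
    (mul_ne_zero (canon_ne_zero hf) (canon_ne_zero hg)),
    natTrailingDegree_mul (canon_ne_zero hf) (canon_ne_zero hg), mindeg, mindeg]

theorem mem_zd_of_one_le_mindeg {f : TPR p c} (hf : f ≠ 0) (h : 1 ≤ mindeg f) :
    f ∈ zd p c := by
  have hc := mindeg_lt hf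
  have hdeg : (X ^ (c - 1) : (ZMod p)[X]).degree < c := by
    rw [degree_X_pow]; exact_mod_cast Nat.sub_one_lt_of_lt hc
  have hX := mk_ne_zero hdeg (pow_ne_zero _ X_ne_zero)
  refine ⟨hf, _, hX, (mul_eq_zero_iff_le_mindeg_add hf hX).mpr ?_⟩
  rw [mindeg_mk hdeg, natTrailingDegree_X_pow]
  omega

theorem le_card_filter_mindeg_eq {i : ℕ} (hi : 1 ≤ i) (hic : i < c) :
    (p - 1) * p ^ (c - 1 - i) ≤ #{w : zd p c | mindeg (w : TPR p c) = i} := by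
  set n := c - 1 - i
  let poly : (ZMod p)ˣ × degreeLT (ZMod p) n → (ZMod p)[X] :=
    fun x => (C (x.1 : ZMod p) + (x.2 : (ZMod p)[X]) * X) * X ^ i
  have hdeg (x) : (poly x).degree < c :=
    (degree_C_add_mul_X_mul_X_pow_lt i _ (mem_degreeLT.mp x.2.2)).trans_le
      (by exact_mod_cast (show n + 1 + i ≤ c by omega))
  have hmindeg (x) : mindeg (AdjoinRoot.mk (X ^ c) (poly x)) = i := by
    rw [mindeg_mk (hdeg x), natTrailingDegree_C_add_mul_X_mul_X_pow i x.1.ne_zero]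
  have hne (x) : AdjoinRoot.mk (X ^ c) (poly x) ≠ 0 :=
    mk_ne_zero (hdeg x) (C_add_mul_X_mul_X_pow_ne_zero i x.1.ne_zero _)
  let φ (x) : {w : zd p c // mindeg (w : TPR p c) = i} :=
    ⟨⟨_, mem_zd_of_one_le_mindeg (hne x) (hmindeg x ▸ hi)⟩, hmindeg x⟩
  have hφ : Function.Injective φ := by
    intro x y hxy
    have h := congrArg (fun w => canon (w.1.1 : TPR p c)) hxy
    simp only [φ, canon_mk (hdeg _)] at h
    obtain ⟨hu, hq⟩ := Prod.ext_iff.mp <| C_add_mul_X_mul_X_pow_injective i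
      (a₁ := ((x.1 : ZMod p), (x.2 : (ZMod p)[X])))
      (a₂ := ((y.1 : ZMod p), (y.2 : (ZMod p)[X]))) h
    exact Prod.ext (Units.ext hu) (Subtype.ext hq)
  calc (p - 1) * p ^ n = Nat.card ((ZMod p)ˣ × degreeLT (ZMod p) n) := by
        rw [Nat.card_prod, Nat.card_congr (degreeLTEquiv _ n).toEquiv, Nat.card_fun, Nat.card_zmod,
          Nat.card_eq_fintype_card, ZMod.card_units, Nat.card_eq_fintype_card, Fintype.card_fin]
    _ ≤ Nat.card {w : zd p c // mindeg (w : TPR p c) = i} := Nat.card_le_card_of_injective φ hφ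
    _ = _ := by rw [Nat.card_eq_fintype_card, Fintype.card_subtype]

theorem adjM_apply_of_two_mul_mindeg_lt {w : zd p c} (hw : 2 * mindeg (w : TPR p c) < c)
    (u : zd p c) :
    adjM p c u w = if c ≤ mindeg (u : TPR p c) + mindeg (w : TPR p c) then 1 else 0 := by
  simp only [adjM, zdGraph, Matrix.of_apply, mul_eq_zero_iff_le_mindeg_add u.2.1 w.2.1]
  by_cases huw : u = w
  · subst huw
    simp only [ne_eq, not_true_eq_false, false_and, if_false]
    rw [if_neg (by omega)]
  · simp only [ne_eq, huw, not_false_eq_true, true_and]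

theorem adjM_add_one_apply_of_le_two_mul_mindeg {w : zd p c} (hw : c ≤ 2 * mindeg (w : TPR p c))
    (u : zd p c) :
    (adjM p c + 1) u w = if c ≤ mindeg (u : TPR p c) + mindeg (w : TPR p c) then 1 else 0 := by
  simp only [Matrix.add_apply, Matrix.one_apply, adjM, zdGraph, Matrix.of_apply,
    mul_eq_zero_iff_le_mindeg_add u.2.1 w.2.1]
  by_cases huw : u = w
  · subst huw
    simp only [ne_eq, not_true_eq_false, false_and, if_false, if_true, zero_add]
    rw [if_pos (by omega)]
  · simp only [ne_eq, huw, not_false_eq_true, true_and, if_false, add_zero]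

theorem sum_le_finrank_eigenspace_adjM (μ : ℝ) (s : Finset ℕ)
    (hs : ∀ i ∈ s, 1 ≤ i ∧ i < c)
    (hA : ∀ u w w' : zd p c, mindeg (w : TPR p c) ∈ s →
      mindeg (w' : TPR p c) = mindeg (w : TPR p c) →
      (adjM p c - μ • 1) u w = (adjM p c - μ • 1) u w') :
    ∑ i ∈ s, ((p - 1) * p ^ (c - 1 - i) - 1) ≤
      finrank ℝ (eigenspace (adjM p c).mulVecLin μ) := by
  classical
  refine le_trans ?_ (sum_card_fiber_sub_one_le_finrank_eigenspace _ μ _ s hA)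
  exact Finset.sum_le_sum fun i hi =>
    Nat.sub_le_sub_right (le_card_filter_mindeg_eq (hs i hi).1 (hs i hi).2) 1

end TruncatedPolynomialRing

/-- For `G = Γ(𝔽_p[x]/(x^(2b)))`, `0` is an adjacency eigenvalue with multiplicity
at least `∑_{i=1}^{b-1} ((p-1)p^{2b-1-i} - 1)` and `-1` is an adjacency eigenvalue
with multiplicity at least `∑_{i=b}^{2b-1} ((p-1)p^{2b-1-i} - 1)`. -/
theorem stmt_15 (p b : ℕ) [Fact p.Prime] (hb : 1 ≤ b) :
    (∑ i ∈ Finset.Icc 1 (b - 1), ((p - 1) * p ^ (2 * b - 1 - i) - 1)) ≤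
      Module.finrank ℝ
        (Module.End.eigenspace ((adjM p (2 * b)).mulVecLin) (0 : ℝ)) ∧
    (∑ i ∈ Finset.Icc b (2 * b - 1), ((p - 1) * p ^ (2 * b - 1 - i) - 1)) ≤
      Module.finrank ℝ
        (Module.End.eigenspace ((adjM p (2 * b)).mulVecLin) (-1 : ℝ)) := by
  refine ⟨sum_le_finrank_eigenspace_adjM 0 _ (fun i hi => ?_) fun u w w' hw hw' => ?_,
    sum_le_finrank_eigenspace_adjM (-1) _ (fun i hi => ?_) fun u w w' hw hw' => ?_⟩
  · rw [Finset.mem_Icc] at hi; omega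
  · rw [Finset.mem_Icc] at hw
    rw [zero_smul, sub_zero, adjM_apply_of_two_mul_mindeg_lt (by omega),
      adjM_apply_of_two_mul_mindeg_lt (by omega), hw']
  · rw [Finset.mem_Icc] at hi; omega
  · rw [Finset.mem_Icc] at hw
    rw [neg_smul, one_smul, sub_neg_eq_add, adjM_add_one_apply_of_le_two_mul_mindeg (by omega),
      adjM_add_one_apply_of_le_two_mul_mindeg (by omega), hw']
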